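/- arXiv:2512.15350 — 3 statements merged into one kernel-verified Lean document; each statement's English description precedes it below -/
import Mathlib

section
/- Let f : Γ → ℝ be a smooth, symmetric, concave function on an open symmetric convex cone Γ ⊆ ℝⁿ containing the positive orthant, with all partial derivatives f_i > 0. Suppose that for all μ ∈ Γ, lim_{t→∞} f(tμ) = sup_Γ f. Fix σ < sup_Γ f and a point x ∈ Γ with f(x) = σ. Then for every λ ∈ Γ, f(x + λ) > σ. -/
open Filter

/-- If `f` satisfies the structure conditions on an open symmetric convex
cone `Γ` containing the positive orthant, `σ < sup_Γ f`, and `f x = σ` for `x ∈ Γ`,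
then `f (x + λ) > σ` for all `λ ∈ Γ`. -/
theorem stmt0 (n : ℕ) (Γ : Set (Fin n → ℝ)) (f : (Fin n → ℝ) → ℝ)
    (hopen : IsOpen Γ) (hconv : Convex ℝ Γ)
    (hsymmSet : ∀ σ : Equiv.Perm (Fin n), ∀ x ∈ Γ, (x ∘ σ) ∈ Γ)
    (hcone : ∀ x ∈ Γ, ∀ t : ℝ, 0 < t → t • x ∈ Γ)
    (horthant : {x : Fin n → ℝ | ∀ i, 0 < x i} ⊆ Γ)
    (hsmooth : ContDiffOn ℝ (⊤ : ℕ∞) f Γ)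
    (hfsymm : ∀ σ : Equiv.Perm (Fin n), ∀ x ∈ Γ, f (x ∘ σ) = f x)
    (hconc : ConcaveOn ℝ Γ f)
    (hmono : ∀ x ∈ Γ, ∀ i : Fin n, 0 < fderiv ℝ f x (Pi.single i 1))
    (hlim : ∀ μ ∈ Γ, ∀ y : ℝ, (∃ z ∈ Γ, y < f z) →
      ∀ᶠ t : ℝ in atTop, y < f (t • μ))
    (σ : ℝ) (x : Fin n → ℝ) (hx : x ∈ Γ) (hfx : f x = σ)
    (hσ : ∃ z ∈ Γ, σ < f z) :
    ∀ l ∈ Γ, σ < f (x + l) := by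
  -- Γ is closed under addition
  have hadd : ∀ a ∈ Γ, ∀ b ∈ Γ, a + b ∈ Γ := by
    intro a ha b hb
    have hm : (1/2 : ℝ) • a + (1/2 : ℝ) • b ∈ Γ :=
      hconv ha hb (by norm_num) (by norm_num) (by norm_num)
    have := hcone _ hm 2 (by norm_num)
    have heq : (2 : ℝ) • ((1/2 : ℝ) • a + (1/2 : ℝ) • b) = a + b := by
      funext i; simp [Pi.smul_apply, smul_eq_mul]; ring
    rwa [heq] at this
  intro l hl
  have hxl : x + l ∈ Γ := hadd x hx l hl
  have h1 := hlim (x + l) hxl σ hσ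
  have h2 := hlim l hl σ hσ
  obtain ⟨t, ht1, hA, hB⟩ :
      ∃ t : ℝ, 1 < t ∧ σ < f (t • (x + l)) ∧ σ < f (t • l) :=
    ((eventually_gt_atTop (1 : ℝ)).and (h1.and h2)).exists
  have ht0 : (0 : ℝ) < t := lt_trans one_pos ht1
  have htne : t ≠ 0 := ne_of_gt ht0
  have hA' : t • (x + l) ∈ Γ := hcone _ hxl t ht0
  have hB' : t • l ∈ Γ := hcone _ hl t ht0
  -- first concavity step: f (x + t•l) > σ
  have key1 : (1/t : ℝ) • (t • (x + l)) + (1 - 1/t : ℝ) • (t • l) = x + t • l := by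
    funext i; simp [Pi.smul_apply, Pi.add_apply, smul_eq_mul]; field_simp; ring
  have hc1 := hconc.2 hA' hB' (show (0:ℝ) ≤ 1/t by positivity)
    (show (0:ℝ) ≤ 1 - 1/t by rw [sub_nonneg]; exact (div_le_one ht0).mpr (le_of_lt ht1))
    (show (1/t : ℝ) + (1 - 1/t) = 1 by ring)
  rw [key1] at hc1
  have hxtl : σ < f (x + t • l) := by
    have h1t : (0:ℝ) < 1/t := by positivity
    have h2t : (0:ℝ) < 1 - 1/t := by
      rw [sub_pos]; exact (div_lt_one ht0).mpr ht1
    simp only [smul_eq_mul] at hc1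
    nlinarith [hc1]
  have hxtlΓ : x + t • l ∈ Γ := hadd x hx _ hB'
  -- second concavity step
  have key2 : (1 - 1/t : ℝ) • x + (1/t : ℝ) • (x + t • l) = x + l := by
    funext i; simp [Pi.smul_apply, Pi.add_apply, smul_eq_mul]; field_simp; ring
  have hc2 := hconc.2 hx hxtlΓ
    (show (0:ℝ) ≤ 1 - 1/t by rw [sub_nonneg]; exact (div_le_one ht0).mpr (le_of_lt ht1))
    (show (0:ℝ) ≤ 1/t by positivity)
    (show (1 - 1/t : ℝ) + 1/t = 1 by ring)
  rw [key2] at hc2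
  have h1t : (0:ℝ) < 1/t := by positivity
  simp only [smul_eq_mul] at hc2
  nlinarith [hc2]
end

section
/- Let f : Γ → ℝ be smooth, symmetric, concave, increasing (f_i > 0) on an open symmetric convex cone Γ containing the positive orthant, with lim_{t→∞} f(tμ) = sup_Γ f for all μ ∈ Γ. Let σ < sup_Γ f and suppose N > 0 is such that f(N·𝟏) = σ where 𝟏 = (1,…,1). Then for every λ ∈ Γ with f(λ) ≤ h₀ < σ, one has ∑ᵢ fᵢ(λ) ≥ N⁻¹(σ − h₀). -/
open Filter

/-- Under the structure conditions, if `f(N·𝟏) = σ` with `N > 0`,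
`σ < sup_Γ f`, then for every `λ ∈ Γ` with `f(λ) ≤ h₀ < σ` one has
`∑ᵢ fᵢ(λ) ≥ N⁻¹ (σ − h₀)`. -/
theorem stmt1 (n : ℕ) (Γ : Set (Fin n → ℝ)) (f : (Fin n → ℝ) → ℝ)
    (hopen : IsOpen Γ) (hconv : Convex ℝ Γ)
    (hsymmSet : ∀ σ : Equiv.Perm (Fin n), ∀ x ∈ Γ, (x ∘ σ) ∈ Γ)
    (hcone : ∀ x ∈ Γ, ∀ t : ℝ, 0 < t → t • x ∈ Γ)
    (horthant : {x : Fin n → ℝ | ∀ i, 0 < x i} ⊆ Γ)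
    (hsmooth : ContDiffOn ℝ (⊤ : ℕ∞) f Γ)
    (hfsymm : ∀ σ : Equiv.Perm (Fin n), ∀ x ∈ Γ, f (x ∘ σ) = f x)
    (hconc : ConcaveOn ℝ Γ f)
    (hmono : ∀ x ∈ Γ, ∀ i : Fin n, 0 < fderiv ℝ f x (Pi.single i 1))
    (hlim : ∀ μ ∈ Γ, ∀ y : ℝ, (∃ z ∈ Γ, y < f z) →
      ∀ᶠ t : ℝ in atTop, y < f (t • μ))
    (σ h₀ N : ℝ) (hN : 0 < N)
    (hNone : (fun _ : Fin n => N) ∈ Γ) (hfN : f (fun _ : Fin n => N) = σ)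
    (hσ : ∃ z ∈ Γ, σ < f z)
    (l : Fin n → ℝ) (hl : l ∈ Γ) (hfl : f l ≤ h₀) (hh₀ : h₀ < σ) :
    N⁻¹ * (σ - h₀) ≤ ∑ i, fderiv ℝ f l (Pi.single i 1) := by
  -- dispose of the degenerate case n = 0
  rcases Nat.eq_zero_or_pos n with hn | hn
  · exfalso
    have hle : l = (fun _ : Fin n => N) := funext fun i => absurd i.2 (by omega)
    rw [← hle] at hfN
    linarith
  -- notation
  set one : Fin n → ℝ := fun _ => 1 with hone_def
  have honeΓ : one ∈ Γ := horthant fun i => one_pos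
  -- Γ is closed under addition
  have hadd : ∀ x ∈ Γ, ∀ y ∈ Γ, x + y ∈ Γ := by
    intro x hx y hy
    have h2 : (2:ℝ) • ((1/2:ℝ) • x + (1/2:ℝ) • y) ∈ Γ :=
      hcone _ (hconv hx hy (by norm_num) (by norm_num) (by norm_num)) 2 (by norm_num)
    convert h2 using 1
    module
  -- differentiability
  have hdiff : ∀ x ∈ Γ, DifferentiableAt ℝ f x := fun x hx =>
    (hsmooth.contDiffAt (hopen.mem_nhds hx)).differentiableAt (by simp)
  -- the gradient inequality for concave functions
  have hgrad : ∀ x ∈ Γ, ∀ y ∈ Γ, f y ≤ f x + fderiv ℝ f x (y - x) := by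
    intro x hx y hy
    rcases eq_or_ne y x with rfl | hne
    · simp
    set φ : ℝ → ℝ := f ∘ (AffineMap.lineMap x y : ℝ →ᵃ[ℝ] (Fin n → ℝ)) with hφ
    have hφconc : ConcaveOn ℝ ((AffineMap.lineMap x y : ℝ →ᵃ[ℝ] (Fin n → ℝ)) ⁻¹' Γ) φ :=
      hconc.comp_affineMap _
    have h0 : (0:ℝ) ∈ (AffineMap.lineMap x y : ℝ →ᵃ[ℝ] (Fin n → ℝ)) ⁻¹' Γ := by
      simp [Set.mem_preimage, AffineMap.lineMap_apply_zero, hx]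
    have h1 : (1:ℝ) ∈ (AffineMap.lineMap x y : ℝ →ᵃ[ℝ] (Fin n → ℝ)) ⁻¹' Γ := by
      simp [Set.mem_preimage, AffineMap.lineMap_apply_one, hy]
    have hc : HasDerivAt (fun s : ℝ => (AffineMap.lineMap x y : ℝ →ᵃ[ℝ] (Fin n → ℝ)) s)
        (y - x) 0 := by
      have : HasDerivAt (fun s : ℝ => s • (y - x) + x) (y - x) 0 := by
        simpa using ((hasDerivAt_id (0:ℝ)).smul_const (y - x)).add_const x
      refine this.congr_deriv rfl |>.congr_of_eventuallyEq ?_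
      filter_upwards with s
      rw [AffineMap.lineMap_apply_module']
    have hder : HasDerivAt φ (fderiv ℝ f x (y - x)) 0 := by
      have hfx : HasFDerivAt f (fderiv ℝ f x) ((AffineMap.lineMap x y : ℝ →ᵃ[ℝ] (Fin n → ℝ)) 0) := by
        rw [AffineMap.lineMap_apply_zero]
        exact (hdiff x hx).hasFDerivAt
      exact hfx.comp_hasDerivAt 0 hc
    have := hφconc.slope_le_of_hasDerivAt h0 h1 one_pos hder
    have hslope : slope φ 0 1 = f y - f x := by
      simp [slope, φ, AffineMap.lineMap_apply_zero, AffineMap.lineMap_apply_one]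
    rw [hslope] at this
    linarith
  -- sum of partials equals derivative in direction 𝟏
  have hsum : ∀ p : Fin n → ℝ, fderiv ℝ f p one = ∑ i, fderiv ℝ f p (Pi.single i 1) := by
    intro p
    have hone : one = ∑ i, Pi.single i (1:ℝ) := by
      funext j
      simp [hone_def, Finset.sum_apply, Pi.single_apply]
    rw [hone, map_sum]
  have hpos : ∀ p ∈ Γ, 0 < fderiv ℝ f p one := by
    intro p hp
    rw [hsum]
    exact Finset.sum_pos (fun i _ => hmono p hp i) ⟨⟨0, hn⟩, Finset.mem_univ _⟩
  -- rewrite N𝟏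
  have hNone' : (fun _ : Fin n => N) = N • one := by
    funext i; simp [hone_def]
  rw [hNone'] at hNone hfN
  have hNoneΓ : N • one ∈ Γ := hNone
  -- pick t ≥ 1 with σ < f (t • l)
  obtain ⟨t, hts, ht1⟩ := ((hlim l hl σ hσ).and (eventually_ge_atTop (1:ℝ))).exists
  have ht0 : (0:ℝ) < t := lt_of_lt_of_le one_pos ht1
  have htl : t • l ∈ Γ := hcone l hl t ht0
  have htlN : t • l + N • one ∈ Γ := hadd _ htl _ hNoneΓ
  have hlN : l + N • one ∈ Γ := hadd _ hl _ hNoneΓ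
  -- monotonicity step : f (t•l) ≤ f (t•l + N•one)
  have hmonostep : f (t • l) ≤ f (t • l + N • one) := by
    have hg := hgrad _ htlN _ htl
    have hv : (t • l) - (t • l + N • one) = -(N • one) := by module
    rw [hv, map_neg, map_smul] at hg
    have hp := hpos _ htlN
    have : 0 < N * fderiv ℝ f (t • l + N • one) one := mul_pos hN hp
    simp only [smul_eq_mul] at hg
    linarith
  -- concavity step : σ < f (l + N•one)
  have hB : σ < f (l + N • one) := by
    have hbt : t⁻¹ * t = 1 := inv_mul_cancel₀ (ne_of_gt ht0)
    have hcomb : (1 - t⁻¹) • (N • one) + t⁻¹ • (t • l + N • one) = l + N • one := by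
      funext i
      simp only [Pi.add_apply, Pi.smul_apply, smul_eq_mul, hone_def]
      field_simp
      ring
    have ha : (0:ℝ) ≤ 1 - t⁻¹ := by
      have : t⁻¹ ≤ 1 := by
        rw [inv_le_one_iff₀]; right; exact ht1
      linarith
    have hb : (0:ℝ) < t⁻¹ := inv_pos.mpr ht0
    have hcc := hconc.2 hNoneΓ htlN ha (le_of_lt hb) (by ring)
    rw [hcomb] at hcc
    simp only [smul_eq_mul, hfN] at hcc
    nlinarith [hmonostep, hts]
  -- gradient step at l
  have hA : f (l + N • one) ≤ f l + N * ∑ i, fderiv ℝ f l (Pi.single i 1) := by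
    have hg := hgrad _ hl _ hlN
    have hv : (l + N • one) - l = N • one := by module
    rw [hv, map_smul, smul_eq_mul, hsum] at hg
    exact hg
  -- conclude
  rw [inv_mul_le_iff₀ hN]
  nlinarith [hA, hB, hfl]
end

section
/- Let Ω = {z ∈ ℂⁿ : φ(z) < 0}, where φ(z) = ∑_{i=1}^n ( −arctan(Im(zᵢ) + tan(nπ/(2n+2))) + nπ/(2n+2) ). Then for every z ∈ Ω and every j ∈ {1,…,n}: −arctan(Im(z_j) + tan(nπ/(2n+2))) < −π/(2n+2); in particular Im(z_j) + tan(nπ/(2n+2)) > tan(π/(2n+2)) > 0, so the complex Hessian (φ_{i\bar j}) is positive semidefinite on Ω. -/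
/-!
Write `θ = π/(2n+2)`, so that the constant `nπ/(2n+2)` is `nθ` and `(n+1)θ = π/2`. Since
`arctan < π/2`, every summand `nθ - arctan xᵢ` of `φ` exceeds `-θ`; as the `n` summands add up
to a negative number, each one is below `(n-1)θ`, i.e. `arctan xⱼ > θ`. Hence `xⱼ > tan θ > 0`,
and the Hessian is diagonal with nonnegative entries.
-/

open Finset Real

open scoped ComplexOrder

theorem Finset.add_card_erase_nsmul_le_sum {ι M : Type*} [DecidableEq ι] [AddCommMonoid M] [PartialOrder M]
    [IsOrderedAddMonoid M] {s : Finset ι} {f : ι → M} {m : M} {j : ι} (hj : j ∈ s)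
    (hm : ∀ i ∈ s, m ≤ f i) : f j + #(s.erase j) • m ≤ ∑ i ∈ s, f i := by
  rw [← add_sum_erase s f hj]
  gcongr
  exact card_nsmul_le_sum _ _ _ fun i hi => hm i (mem_of_mem_erase hi)

theorem Real.lt_arctan_of_sum_neg {ι : Type*} [Fintype ι] {x : ι → ℝ} {θ : ℝ}
    (hθ : (Fintype.card ι + 1) * θ = π / 2)
    (hsum : ∑ i, (-arctan (x i) + Fintype.card ι * θ) < 0) (j : ι) : θ < arctan (x j) := by
  classical
  have hlower : ∀ i ∈ univ, -θ ≤ -arctan (x i) + Fintype.card ι * θ := fun i _ => by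
    linarith [arctan_lt_pi_div_two (x i)]
  have h := add_card_erase_nsmul_le_sum (mem_univ j) hlower
  rw [card_erase_of_mem (mem_univ j), card_univ, nsmul_eq_mul,
    Nat.cast_pred (Fintype.card_pos_iff.mpr ⟨j⟩)] at h
  linarith

theorem Real.tan_lt_of_lt_arctan {θ x : ℝ} (hθ : -(π / 2) < θ) (h : θ < arctan x) :
    tan θ < x := by
  simpa only [tan_arctan] using tan_lt_tan_of_lt_of_lt_pi_div_two hθ (arctan_lt_pi_div_two x) h

theorem stmt6_general (n : ℕ) (φ : (Fin n → ℂ) → ℝ)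
    (hφ : φ = fun z => ∑ i,
      (-Real.arctan ((z i).im + Real.tan ((n : ℝ) * Real.pi / (2 * (n : ℝ) + 2)))
        + (n : ℝ) * Real.pi / (2 * (n : ℝ) + 2)))
    (z : Fin n → ℂ) (hz : φ z < 0) :
    (∀ j : Fin n,
      -Real.arctan ((z j).im + Real.tan ((n : ℝ) * Real.pi / (2 * (n : ℝ) + 2)))
          < -(Real.pi / (2 * (n : ℝ) + 2))
      ∧ Real.tan (Real.pi / (2 * (n : ℝ) + 2))
          < (z j).im + Real.tan ((n : ℝ) * Real.pi / (2 * (n : ℝ) + 2))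
      ∧ 0 < Real.tan (Real.pi / (2 * (n : ℝ) + 2)))
    ∧ (Matrix.of fun i j : Fin n =>
        (if i = j then
          ((((z i).im + Real.tan ((n : ℝ) * Real.pi / (2 * (n : ℝ) + 2))) /
            (2 * (1 + ((z i).im + Real.tan ((n : ℝ) * Real.pi / (2 * (n : ℝ) + 2))) ^ 2) ^ 2) : ℝ) : ℂ)
        else 0)).PosSemidef := by
  set θ := π / (2 * (n : ℝ) + 2)
  set x : Fin n → ℝ := fun i => (z i).im + tan (n * π / (2 * n + 2))
  have hθ_pos : 0 < θ := by positivity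
  have hθ : (Fintype.card (Fin n) + 1) * θ = π / 2 := by
    simp only [Fintype.card_fin, θ]; field_simp
  have hsum : ∑ i, (-arctan (x i) + Fintype.card (Fin n) * θ) < 0 := by
    rw [hφ] at hz
    rw [Fintype.card_fin]
    convert hz using 4
    exact (mul_div_assoc ..).symm
  have harctan (j : Fin n) : θ < arctan (x j) := lt_arctan_of_sum_neg hθ hsum j
  have htan_lt (j : Fin n) : tan θ < x j := tan_lt_of_lt_arctan (by linarith [pi_pos]) (harctan j)
  have htan_pos (j : Fin n) : 0 < tan θ :=
    tan_pos_of_pos_of_lt_pi_div_two hθ_pos ((harctan j).trans (arctan_lt_pi_div_two _))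
  refine ⟨fun j => ⟨neg_lt_neg (harctan j), htan_lt j, htan_pos j⟩, ?_⟩
  refine Matrix.posSemidef_diagonal_iff.mpr fun i => Complex.zero_le_real.mpr ?_
  have hx : 0 < x i := (htan_pos i).trans (htan_lt i)
  positivity

/-- On `Ω = {φ < 0}` with
`φ(z) = ∑ᵢ (−arctan(Im zᵢ + tan(nπ/(2n+2))) + nπ/(2n+2))`, each summand satisfies
`−arctan(Im z_j + tan(nπ/(2n+2))) < −π/(2n+2)`, hence
`Im z_j + tan(nπ/(2n+2)) > tan(π/(2n+2)) > 0`, and the complex Hessian of `φ` is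
positive semidefinite on `Ω`. -/
theorem stmt6 (n : ℕ) (hn : 1 ≤ n) (φ : (Fin n → ℂ) → ℝ)
    (hφ : φ = fun z => ∑ i,
      (-Real.arctan ((z i).im + Real.tan ((n : ℝ) * Real.pi / (2 * (n : ℝ) + 2)))
        + (n : ℝ) * Real.pi / (2 * (n : ℝ) + 2)))
    (z : Fin n → ℂ) (hz : φ z < 0) :
    (∀ j : Fin n,
      -Real.arctan ((z j).im + Real.tan ((n : ℝ) * Real.pi / (2 * (n : ℝ) + 2)))
          < -(Real.pi / (2 * (n : ℝ) + 2))
      ∧ Real.tan (Real.pi / (2 * (n : ℝ) + 2))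
          < (z j).im + Real.tan ((n : ℝ) * Real.pi / (2 * (n : ℝ) + 2))
      ∧ 0 < Real.tan (Real.pi / (2 * (n : ℝ) + 2)))
    ∧ (Matrix.of fun i j : Fin n =>
        (if i = j then
          ((((z i).im + Real.tan ((n : ℝ) * Real.pi / (2 * (n : ℝ) + 2))) /
            (2 * (1 + ((z i).im + Real.tan ((n : ℝ) * Real.pi / (2 * (n : ℝ) + 2))) ^ 2) ^ 2) : ℝ) : ℂ)
        else 0)).PosSemidef :=
  stmt6_general n φ hφ z hz
end
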